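/- Let P be a tree whose rank is an additively indecomposable ordinal, let Q be a subtree of P, and let A ⊆ λ(rank(P)) be such that ς_P(s,t) ∈ A for every (s,t) ∈ Λ_2(Q). If rank(P) = 1, then rank(Q) ≤ 1. If rank(P) = ω^{ω^{ε_0}}·…·ω^{ω^{ε_l}} with ε_0 ≥ … ≥ ε_l, then rank(Q) ≤ ω^{ω^{ε_0}·1_A(0)}·…·ω^{ω^{ε_l}·1_A(l)}. -/

import Mathlib

open Ordinal Set

universe u

/-- The set of maximal elements ("leaves") of `P`. -/
def treeLeaves {α : Type u} [PartialOrder α] (P : Set α) : Set α :=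
  {t ∈ P | ∀ s ∈ P, ¬ t < s}

/-- The derivative `P' = P \ Leaves P`. -/
def treeDeriv {α : Type u} [PartialOrder α] (P : Set α) : Set α :=
  P \ treeLeaves P

/-- The transfinite iterated derivative `P^ξ`. -/
noncomputable def derivIter {α : Type u} [PartialOrder α] (P : Set α) (ξ : Ordinal.{u}) :
    Set α :=
  Ordinal.limitRecOn ξ P (fun _ ih => treeDeriv ih)
    (fun o _ ih => ⋂ (ζ : Set.Iio o), ih ζ.1 ζ.2)

/-- `P` is a tree: every ancestor set is well-ordered (a well-founded chain). -/
def IsTree {α : Type u} [PartialOrder α] (P : Set α) : Prop :=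
  ∀ t ∈ P, IsChain (· ≤ ·) {s ∈ P | s ≤ t} ∧ {s ∈ P | s ≤ t}.WellFoundedOn (· < ·)

/-- `P` is well-founded: some transfinite derivative is empty. -/
def IsWFTree {α : Type u} [PartialOrder α] (P : Set α) : Prop :=
  ∃ ξ : Ordinal.{u}, derivIter P ξ = ∅

/-- The rank of a well-founded tree: the least `ξ` with `P^ξ = ∅`. -/
noncomputable def treeRank {α : Type u} [PartialOrder α] (P : Set α) : Ordinal.{u} :=
  sInf {ξ | derivIter P ξ = ∅}

/-- `τ_P(t)`: the largest ordinal `ξ` with `t ∈ P^ξ`. -/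
noncomputable def treeTau {α : Type u} [PartialOrder α] (P : Set α) (t : α) : Ordinal.{u} :=
  sSup {ξ | t ∈ derivIter P ξ}

/-- `τ_{P,β}(t)`: the largest ordinal `ξ` with `t ∈ P^{β·ξ}`. -/
noncomputable def treeTauMul {α : Type u} [PartialOrder α] (P : Set α) (β : Ordinal.{u})
    (t : α) : Ordinal.{u} :=
  sSup {ξ | t ∈ derivIter P (β * ξ)}

/-- `alpProd ε i = ω^{ω^{ε 0}} · ⋯ · ω^{ω^{ε i}}`. -/
noncomputable def alpProd (ε : ℕ → Ordinal.{u}) : ℕ → Ordinal.{u}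
  | 0 => omega0 ^ omega0 ^ ε 0
  | (i + 1) => alpProd ε i * omega0 ^ omega0 ^ ε (i + 1)

/-- The separation function `ς_P` of a tree whose rank has decomposition
`ω^{ω^{ε 0}} ⋯ ω^{ω^{ε l}}`: the least `i` such that `s, t` lie in the same block
`P^{α_i·δ} \ P^{α_i·(δ+1)}` for some ordinal `δ`. -/
noncomputable def sep {α : Type u} [PartialOrder α] (P : Set α) (ε : ℕ → Ordinal.{u})
    (s t : α) : ℕ :=
  sInf {i : ℕ | ∃ δ : Ordinal.{u},
    s ∈ derivIter P (alpProd ε i * δ) \ derivIter P (alpProd ε i * (δ + 1)) ∧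
    t ∈ derivIter P (alpProd ε i * δ) \ derivIter P (alpProd ε i * (δ + 1))}

/-- `indProd ε A l = ω^{ω^{ε 0}·1_A(0)} ⋯ ω^{ω^{ε l}·1_A(l)}`. -/
noncomputable def indProd (ε : ℕ → Ordinal.{u}) (A : Set ℕ) : ℕ → Ordinal.{u}
  | 0 => omega0 ^ (omega0 ^ ε 0 * A.indicator (fun _ => (1 : Ordinal.{u})) 0)
  | (i + 1) => indProd ε A i *
      omega0 ^ (omega0 ^ ε (i + 1) * A.indicator (fun _ => (1 : Ordinal.{u})) (i + 1))

/-- `sumPow ε i = ω^{ε 0} + ⋯ + ω^{ε (i-1)}` (the partial sums `γ_i`). -/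
noncomputable def sumPow (ε : ℕ → Ordinal.{u}) : ℕ → Ordinal.{u}
  | 0 => 0
  | (i + 1) => sumPow ε i + omega0 ^ ε i

/-- `indSum ε A i = Σ_{n < i} 1_A(n)·ω^{ε n}`. -/
noncomputable def indSum (ε : ℕ → Ordinal.{u}) (A : Set ℕ) : ℕ → Ordinal.{u}
  | 0 => 0
  | (i + 1) => indSum ε A i + A.indicator (fun _ => (1 : Ordinal.{u})) i * omega0 ^ ε i


/-!
Let `τ_P(t)` be the largest `ξ` with `t ∈ P^ξ`, and write `τ_P(t) < rank P` in mixed radix with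
digit bases `ω^{ω^{ε_0}}, …, ω^{ω^{ε_l}}`. Then `ς_P(s, t)` is the index of the most significant
digit in which `τ_P(s)` and `τ_P(t)` differ. Deleting the digits with index outside `A` gives an
ordinal below `ω^{ω^{ε_0}·1_A(0)} ⋯ ω^{ω^{ε_l}·1_A(l)}`, and along `Q` this ordinal still strictly
decreases, because every comparison `s < t` in `Q` is decided at a digit in `A`. A strictly
decreasing ordinal labelling of `Q` by ordinals below `β` forces `rank Q ≤ β`.
-/

namespace Ordinal

theorem div_eq_mul_div_mul_add_mod_div {b : Ordinal} (hb : b ≠ 0) (x c : Ordinal) :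
    x / b = c * (x / (b * c)) + x % (b * c) / b := by
  conv_lhs => rw [← div_add_mod x (b * c), mul_assoc, mul_add_div _ hb]

theorem div_mul_eq_div_div (x b c : Ordinal) : x / (b * c) = x / b / c := by
  rcases eq_or_ne b 0 with rfl | hb
  · simp
  rcases eq_or_ne c 0 with rfl | hc
  · simp
  have hmod : x % (b * c) / b < c := (lt_mul_iff_div_lt hb).1 (mod_lt x (mul_ne_zero hb hc))
  rw [div_eq_mul_div_mul_add_mod_div hb x c, mul_add_div _ hc, div_eq_zero_of_lt hmod, add_zero]

theorem div_eq_div_of_dvd {b d x y : Ordinal} (hbd : b ∣ d) (h : x / b = y / b) :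
    x / d = y / d := by
  obtain ⟨c, rfl⟩ := hbd
  rw [div_mul_eq_div_div, div_mul_eq_div_div, h]

theorem div_eq_div_iff_mod_div_eq_mod_div {b c x y : Ordinal} (hb : b ≠ 0)
    (h : x / (b * c) = y / (b * c)) :
    x / b = y / b ↔ x % (b * c) / b = y % (b * c) / b := by
  rw [div_eq_mul_div_mul_add_mod_div hb x c, div_eq_mul_div_mul_add_mod_div hb y c, h,
    add_right_inj]

theorem mod_lt_mod_of_div_eq {b x y : Ordinal} (hxy : x < y) (h : x / b = y / b) :
    x % b < y % b := by
  rwa [← div_add_mod x b, ← div_add_mod y b, h, add_lt_add_iff_left] at hxy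

end Ordinal

section Derivative
variable {α : Type u} [PartialOrder α] {P : Set α} {s t : α} {ξ : Ordinal.{u}}

theorem derivIter_zero (P : Set α) : derivIter P 0 = P :=
  limitRecOn_zero _ _ _

theorem derivIter_succ (P : Set α) (ξ : Ordinal.{u}) :
    derivIter P (ξ + 1) = treeDeriv (derivIter P ξ) :=
  limitRecOn_add_one _ _ _ _

theorem derivIter_limit (P : Set α) (hξ : Order.IsSuccLimit ξ) :
    derivIter P ξ = ⋂ ζ : Iio ξ, derivIter P ζ :=
  limitRecOn_limit _ _ _ _ hξ

theorem mem_derivIter_succ_iff :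
    t ∈ derivIter P (ξ + 1) ↔ t ∈ derivIter P ξ ∧ ∃ s ∈ derivIter P ξ, t < s := by
  simp [derivIter_succ, treeDeriv, treeLeaves]

theorem derivIter_antitone (P : Set α) : Antitone (derivIter P) := by
  intro ζ ξ hζξ
  induction ξ using limitRecOn with
  | zero => rw [nonpos_iff_eq_zero.1 hζξ]
  | add_one ξ ih =>
    rcases hζξ.eq_or_lt with rfl | hlt
    · rfl
    · rw [derivIter_succ]
      exact sdiff_subset.trans (ih (Order.lt_add_one_iff.1 hlt))
  | limit ξ hξ _ =>
    rcases hζξ.eq_or_lt with rfl | hlt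
    · rfl
    · rw [derivIter_limit P hξ]
      exact iInter_subset (fun ζ : Iio ξ => derivIter P ζ) ⟨ζ, hlt⟩

theorem derivIter_subset (P : Set α) (ξ : Ordinal.{u}) : derivIter P ξ ⊆ P := by
  simpa only [derivIter_zero] using derivIter_antitone P (show 0 ≤ ξ from zero_le)

theorem mem_derivIter_of_lt (hs : s ∈ P) (ht : t ∈ derivIter P ξ) (hst : s < t) :
    s ∈ derivIter P ξ := by
  induction ξ using limitRecOn with
  | zero => rwa [derivIter_zero]
  | add_one ξ ih =>
    rw [mem_derivIter_succ_iff] at ht ⊢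
    exact ⟨ih ht.1, t, ht.1, hst⟩
  | limit ξ hξ ih =>
    rw [derivIter_limit P hξ, mem_iInter] at ht ⊢
    exact fun ζ => ih ζ ζ.2 (ht ζ)

end Derivative

section Rank
variable {α : Type u} [PartialOrder α] {P Q : Set α} {s t : α} {ξ : Ordinal.{u}}

theorem le_of_mem_derivIter_of_strictAnti {f : α → Ordinal.{u}}
    (hf : ∀ s ∈ Q, ∀ t ∈ Q, s < t → f t < f s) (ht : t ∈ derivIter Q ξ) : ξ ≤ f t := by
  induction ξ using limitRecOn generalizing t with
  | zero => exact zero_le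
  | add_one ξ ih =>
    obtain ⟨ht, s, hs, hts⟩ := mem_derivIter_succ_iff.1 ht
    exact Order.add_one_le_of_lt ((ih hs).trans_lt
      (hf t (derivIter_subset Q ξ ht) s (derivIter_subset Q ξ hs) hts))
  | limit ξ hξ ih =>
    rw [derivIter_limit Q hξ, mem_iInter] at ht
    exact hξ.le_iff_forall_le.2 fun ζ hζ => ih ζ hζ (ht ⟨ζ, hζ⟩)

theorem treeRank_le_of_strictAnti {f : α → Ordinal.{u}} {β : Ordinal.{u}}
    (hf : ∀ s ∈ Q, ∀ t ∈ Q, s < t → f t < f s) (hβ : ∀ t ∈ Q, f t < β) :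
    treeRank Q ≤ β := by
  refine csInf_le' (eq_empty_iff_forall_notMem.2 fun t ht => ?_)
  exact (le_of_mem_derivIter_of_strictAnti hf ht).not_gt (hβ t (derivIter_subset Q β ht))

theorem derivIter_treeRank (hWF : IsWFTree P) : derivIter P (treeRank P) = ∅ :=
  csInf_mem hWF

theorem lt_treeRank_of_mem_derivIter (hWF : IsWFTree P) (ht : t ∈ derivIter P ξ) :
    ξ < treeRank P := by
  by_contra! h
  simpa [derivIter_treeRank hWF] using derivIter_antitone P h ht

theorem bddAbove_setOf_mem_derivIter (hWF : IsWFTree P) (t : α) :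
    BddAbove {ξ : Ordinal.{u} | t ∈ derivIter P ξ} :=
  ⟨treeRank P, fun _ hξ => (lt_treeRank_of_mem_derivIter hWF hξ).le⟩

theorem mem_derivIter_treeTau (ht : t ∈ P) : t ∈ derivIter P (treeTau P t) := by
  have hne : {ξ : Ordinal.{u} | t ∈ derivIter P ξ}.Nonempty := ⟨0, by simpa [derivIter_zero]⟩
  rcases zero_or_succ_or_isSuccLimit (treeTau P t) with h | ⟨ζ, h⟩ | h
  · rwa [h, derivIter_zero]
  · obtain ⟨ξ, hξ, hζξ⟩ := exists_lt_of_lt_csSup hne (h ▸ Order.lt_succ ζ)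
    exact derivIter_antitone P (h ▸ Order.succ_le_of_lt hζξ) hξ
  · rw [derivIter_limit P h, mem_iInter]
    intro ζ
    obtain ⟨ξ, hξ, hζξ⟩ := exists_lt_of_lt_csSup hne ζ.2
    exact derivIter_antitone P hζξ.le hξ

theorem mem_derivIter_iff_le_treeTau (hWF : IsWFTree P) (ht : t ∈ P) :
    t ∈ derivIter P ξ ↔ ξ ≤ treeTau P t :=
  ⟨fun h => le_csSup (bddAbove_setOf_mem_derivIter hWF t) h,
    fun h => derivIter_antitone P h (mem_derivIter_treeTau ht)⟩

theorem treeTau_lt_treeRank (hWF : IsWFTree P) (ht : t ∈ P) : treeTau P t < treeRank P :=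
  lt_treeRank_of_mem_derivIter hWF (mem_derivIter_treeTau ht)

theorem treeTau_lt_treeTau (hWF : IsWFTree P) (hs : s ∈ P) (ht : t ∈ P) (hst : s < t) :
    treeTau P t < treeTau P s := by
  have htτ := mem_derivIter_treeTau ht
  have hsτ : s ∈ derivIter P (treeTau P t + 1) :=
    mem_derivIter_succ_iff.2 ⟨mem_derivIter_of_lt hs htτ hst, t, htτ, hst⟩
  exact Order.add_one_le_iff.1 ((mem_derivIter_iff_le_treeTau hWF hs).1 hsτ)

theorem treeRank_le_treeRank (hWF : IsWFTree P) (hQP : Q ⊆ P) : treeRank Q ≤ treeRank P :=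
  treeRank_le_of_strictAnti (f := treeTau P)
    (fun _ hs _ ht hst => treeTau_lt_treeTau hWF (hQP hs) (hQP ht) hst)
    (fun _ ht => treeTau_lt_treeRank hWF (hQP ht))

end Rank

section Digits
variable {ε : ℕ → Ordinal.{u}} {A : Set ℕ} {i k : ℕ} {ρ ρ' : Ordinal.{u}}

theorem alpProd_ne_zero (ε : ℕ → Ordinal.{u}) (i : ℕ) : alpProd ε i ≠ 0 := by
  induction i with
  | zero => exact opow_ne_zero _ omega0_ne_zero
  | succ i ih => exact mul_ne_zero ih (opow_ne_zero _ omega0_ne_zero)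

theorem alpProd_dvd_alpProd (h : i ≤ k) : alpProd ε i ∣ alpProd ε k := by
  induction k, h using Nat.le_induction with
  | base => exact dvd_rfl
  | succ k _ ih => exact ih.mul_right _

/-- Reads `ρ` in mixed radix with digit bases `ω^{ω^{ε 0}}, …, ω^{ω^{ε k}}` (the top digit
unbounded) and deletes the digits whose index is not in `A`. -/
noncomputable def selectDigits (ε : ℕ → Ordinal.{u}) (A : Set ℕ) : ℕ → Ordinal.{u} → Ordinal.{u}
  | 0, ρ => A.indicator (fun _ => 1) 0 * ρ
  | i + 1, ρ => indProd ε A i * (A.indicator (fun _ => 1) (i + 1) * (ρ / alpProd ε i)) +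
      selectDigits ε A i (ρ % alpProd ε i)

theorem selectDigits_lt_indProd (k : ℕ) (hρ : ρ < alpProd ε k) :
    selectDigits ε A k ρ < indProd ε A k := by
  induction k generalizing ρ with
  | zero => by_cases h : 0 ∈ A <;> simp_all [selectDigits, indProd, alpProd]
  | succ k ih =>
    have hk := alpProd_ne_zero ε k
    have hrem := ih (mod_lt ρ hk)
    by_cases h : k + 1 ∈ A
    · have hq : ρ / alpProd ε k < omega0 ^ omega0 ^ ε (k + 1) := (lt_mul_iff_div_lt hk).1 hρ
      simp only [selectDigits, indProd, indicator_of_mem h, one_mul, mul_one]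
      calc indProd ε A k * (ρ / alpProd ε k) + selectDigits ε A k (ρ % alpProd ε k)
          < indProd ε A k * (ρ / alpProd ε k) + indProd ε A k := add_lt_add_right hrem _
        _ = indProd ε A k * (ρ / alpProd ε k + 1) := (mul_add_one _ _).symm
        _ ≤ indProd ε A k * omega0 ^ omega0 ^ ε (k + 1) :=
          mul_le_mul_right (Order.add_one_le_of_lt hq) _
    · simpa [selectDigits, indProd, h] using hrem

theorem selectDigits_succ_lt_of_div_lt (hA : i + 1 ∈ A)
    (hq : ρ' / alpProd ε i < ρ / alpProd ε i) :
    selectDigits ε A (i + 1) ρ' < selectDigits ε A (i + 1) ρ := by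
  have hrem := selectDigits_lt_indProd (A := A) i (mod_lt ρ' (alpProd_ne_zero ε i))
  simp only [selectDigits, indicator_of_mem hA, one_mul]
  calc indProd ε A i * (ρ' / alpProd ε i) + selectDigits ε A i (ρ' % alpProd ε i)
      < indProd ε A i * (ρ' / alpProd ε i) + indProd ε A i := add_lt_add_right hrem _
    _ = indProd ε A i * (ρ' / alpProd ε i + 1) := (mul_add_one _ _).symm
    _ ≤ indProd ε A i * (ρ / alpProd ε i) := mul_le_mul_right (Order.add_one_le_of_lt hq) _
    _ ≤ _ := le_self_add

theorem selectDigits_lt_selectDigits (hA : i ∈ A) (hik : i ≤ k) (hlt : ρ' < ρ)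
    (heq : ρ' / alpProd ε i = ρ / alpProd ε i)
    (hne : ∀ j < i, ρ' / alpProd ε j ≠ ρ / alpProd ε j) :
    selectDigits ε A k ρ' < selectDigits ε A k ρ := by
  induction k, hik using Nat.le_induction generalizing ρ' ρ with
  | base =>
    cases i with
    | zero => simpa [selectDigits, hA] using hlt
    | succ m =>
      exact selectDigits_succ_lt_of_div_lt hA
        (lt_of_le_of_ne (div_le_left hlt.le _) (hne m m.lt_succ_self))
  | succ k hik ih =>
    have hk : ρ' / alpProd ε k = ρ / alpProd ε k := div_eq_div_of_dvd (alpProd_dvd_alpProd hik) heq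
    have hrem : ∀ j ≤ k, ρ' / alpProd ε j = ρ / alpProd ε j ↔
        ρ' % alpProd ε k / alpProd ε j = ρ % alpProd ε k / alpProd ε j := by
      intro j hj
      obtain ⟨c, hc⟩ := alpProd_dvd_alpProd (ε := ε) hj
      rw [hc] at hk ⊢
      exact div_eq_div_iff_mod_div_eq_mod_div (alpProd_ne_zero ε j) hk
    have := ih (mod_lt_mod_of_div_eq hlt hk) ((hrem i hik).1 heq)
      fun j hj h => hne j hj ((hrem j (by omega)).2 h)
    simp only [selectDigits]
    rw [hk]
    exact add_lt_add_right this _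

end Digits

section Separation
variable {α : Type u} [PartialOrder α] {P : Set α} {ε : ℕ → Ordinal.{u}} {s t : α}

theorem mem_block_iff (hWF : IsWFTree P) (ht : t ∈ P) {β δ : Ordinal.{u}} (hβ : β ≠ 0) :
    t ∈ derivIter P (β * δ) \ derivIter P (β * (δ + 1)) ↔ treeTau P t / β = δ := by
  rw [mem_sdiff, mem_derivIter_iff_le_treeTau hWF ht, mem_derivIter_iff_le_treeTau hWF ht, not_le,
    mul_le_iff_le_div hβ, lt_mul_iff_div_lt hβ, Order.lt_add_one_iff, le_antisymm_iff, and_comm]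

theorem sep_eq_sInf (hWF : IsWFTree P) (hs : s ∈ P) (ht : t ∈ P) :
    sep P ε s t = sInf {i | treeTau P s / alpProd ε i = treeTau P t / alpProd ε i} := by
  unfold sep
  congr 1
  ext i
  simp only [mem_ofPred_eq, mem_block_iff hWF hs (alpProd_ne_zero ε i),
    mem_block_iff hWF ht (alpProd_ne_zero ε i)]
  exact ⟨fun ⟨_, hs, ht⟩ => hs.trans ht.symm, fun h => ⟨_, rfl, h.symm⟩⟩

theorem selectDigits_treeTau_lt {A : Set ℕ} {l : ℕ} (hWF : IsWFTree P)
    (hrank : treeRank P = alpProd ε l) (hs : s ∈ P) (ht : t ∈ P) (hst : s < t)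
    (hA : sep P ε s t ∈ A) :
    selectDigits ε A l (treeTau P t) < selectDigits ε A l (treeTau P s) := by
  rw [sep_eq_sInf hWF hs ht] at hA
  have hl : l ∈ {i | treeTau P s / alpProd ε i = treeTau P t / alpProd ε i} := by
    rw [mem_ofPred_eq, div_eq_zero_of_lt (hrank ▸ treeTau_lt_treeRank hWF hs),
      div_eq_zero_of_lt (hrank ▸ treeTau_lt_treeRank hWF ht)]
  exact selectDigits_lt_selectDigits hA (Nat.sInf_le hl) (treeTau_lt_treeTau hWF hs ht hst)
    (Nat.sInf_mem ⟨l, hl⟩).symm fun j hj h => Nat.notMem_of_lt_sInf hj h.symm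

end Separation

theorem statement18_general {α : Type u} [PartialOrder α] (P : Set α)
    (hWF : IsWFTree P) (Q : Set α) (hQP : Q ⊆ P) :
    (treeRank P = 1 → treeRank Q ≤ 1) ∧
    (∀ (l : ℕ) (ε : ℕ → Ordinal.{u}), (∀ i < l, ε (i + 1) ≤ ε i) →
      ∀ A : Set ℕ, (∀ i ∈ A, i ≤ l) →
        treeRank P = alpProd ε l →
        (∀ s ∈ Q, ∀ t ∈ Q, s < t → sep P ε s t ∈ A) →
        treeRank Q ≤ indProd ε A l) := by
  refine ⟨fun h => h ▸ treeRank_le_treeRank hWF hQP, fun l ε _ A _ hrank hsep => ?_⟩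
  exact treeRank_le_of_strictAnti (f := fun t => selectDigits ε A l (treeTau P t))
    (fun s hs t ht hst =>
      selectDigits_treeTau_lt hWF hrank (hQP hs) (hQP ht) hst (hsep s hs t ht hst))
    (fun t ht => selectDigits_lt_indProd l (hrank ▸ treeTau_lt_treeRank hWF (hQP ht)))

/-- sparseness: if `P` has additively indecomposable rank, `Q` is
a subtree all of whose pairs have separation in `A ⊆ λ(rank P)`, then
`rank(Q) ≤ 1` when `rank(P) = 1`, and `rank(Q) ≤ ω^{ω^{ε_0}·1_A(0)}⋯ω^{ω^{ε_l}·1_A(l)}`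
when `rank(P) = ω^{ω^{ε_0}}⋯ω^{ω^{ε_l}}`. -/
theorem statement18 {α : Type u} [PartialOrder α] (P : Set α) (hP : IsTree P)
    (hWF : IsWFTree P) (Q : Set α) (hQP : Q ⊆ P) :
    (treeRank P = 1 → treeRank Q ≤ 1) ∧
    (∀ (l : ℕ) (ε : ℕ → Ordinal.{u}), (∀ i < l, ε (i + 1) ≤ ε i) →
      ∀ A : Set ℕ, (∀ i ∈ A, i ≤ l) →
        treeRank P = alpProd ε l →
        (∀ s ∈ Q, ∀ t ∈ Q, s < t → sep P ε s t ∈ A) →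
        treeRank Q ≤ indProd ε A l) :=
  statement18_general P hWF Q hQP
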